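/- Let G be a formal power series in x, y_1, …, y_t over ℚ with zero constant term satisfying G = x·∏_{i=1}^{t}(1 + y_i·G), and let m be an integer with 1 ≤ m ≤ t. Then for every integer n ≥ m and every tuple of natural numbers (a_1, …, a_t) with a_1 + ⋯ + a_t = n and a_i ≥ 1 for all 1 ≤ i ≤ m, the coefficient of x^n·y_1^{a_1}⋯y_t^{a_t} in the series y_1·y_2⋯y_m·G^m equals (m/n)·C(n,a_1−1)⋯C(n,a_m−1)·C(n,a_{m+1})⋯C(n,a_t), where C(n,k) denotes the binomial coefficient. -/

import Mathlib

/-!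
Expanding `G ^ m = x ^ m * ∏ i, (1 + y i * G) ^ m` binomially expresses the coefficient of
`x ^ n * y ^ b` in `G ^ m` through the coefficients of `x ^ (n - m) * y ^ (b - K)` in `G ^ |K|`,
`K ≤ b`. By strong induction on `n`, the claim `n * [x ^ n y ^ b] G ^ m = m * ∏ i, C(n, b i)`
(for `|b| + m = n`) then reduces to
`∑ K, |K| * ∏ i, C(m, K i) * C(M, b i - K i) = (m * M / n) * ∏ i, C(n, b i)` with `M = |b|`,
which follows from the product rule `|K| = ∑ j, K j` and the Vandermonde convolution together
with its weighted form `∑ k, k * C(m, k) * C(M, B - k) = (m * B / n) * C(n, B)`.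
Multiplying by `y 1 ⋯ y m` merely lowers the first `m` exponents by one.
-/

open Finset MvPowerSeries

theorem sum_range_choose_mul_choose (m M B : ℕ) :
    ∑ k ∈ range (B + 1), m.choose k * M.choose (B - k) = (m + M).choose B := by
  rw [Nat.add_choose_eq, Finset.Nat.sum_antidiagonal_eq_sum_range_succ_mk]

theorem add_mul_sum_range_mul_choose_mul_choose (m M B : ℕ) :
    (m + M) * ∑ k ∈ range (B + 1), k * (m.choose k * M.choose (B - k)) =
      m * B * (m + M).choose B := by
  rcases m with _ | m
  · simp only [zero_add, zero_mul, mul_eq_zero]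
    exact Or.inr (sum_eq_zero fun k _ => by cases k <;> simp)
  rcases B with _ | B
  · simp
  have absorb (k : ℕ) : (k + 1) * (m + 1).choose (k + 1) = (m + 1) * m.choose k := by
    rw [Nat.add_one_mul_choose_eq, mul_comm]
  have pascal := Nat.add_one_mul_choose_eq (m + M) B
  simp only [sum_range_succ' _ (B + 1), ← mul_assoc, absorb, Nat.add_sub_add_right, zero_mul,
    add_zero]
  simp only [mul_assoc, ← mul_sum, sum_range_choose_mul_choose]
  rw [show m + 1 + M = m + M + 1 by ring, mul_left_comm, pascal]
  ring

theorem sum_piFinset_sum_mul_prod {ι κ R : Type*} [Fintype ι] [DecidableEq ι] [CommSemiring R]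
    (s : ι → Finset κ) (w : κ → R) (g : ι → κ → R) :
    ∑ K ∈ Fintype.piFinset s, (∑ j, w (K j)) * ∏ i, g i (K i) =
      ∑ j, (∑ k ∈ s j, w k * g j k) * ∏ i ∈ univ.erase j, ∑ k ∈ s i, g i k := by
  simp only [sum_mul (s := univ)]
  rw [sum_comm]
  refine sum_congr rfl fun j _ => ?_
  have hj := mem_univ j
  set h := Function.update g j (fun k => w k * g j k)
  have h_self : h j = fun k => w k * g j k := Function.update_self ..
  have h_erase (i) (hi : i ∈ univ.erase j) : h i = g i :=
    Function.update_of_ne (ne_of_mem_erase hi) ..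
  calc ∑ K ∈ Fintype.piFinset s, w (K j) * ∏ i, g i (K i)
      = ∑ K ∈ Fintype.piFinset s, ∏ i, h i (K i) := by
        refine sum_congr rfl fun K _ => ?_
        rw [← mul_prod_erase _ _ hj, ← mul_prod_erase _ _ hj, h_self, mul_assoc]
        exact congrArg _ (congrArg _ (prod_congr rfl fun i hi => by rw [h_erase i hi]))
    _ = _ := by
        rw [← prod_univ_sum, ← mul_prod_erase _ _ hj, h_self]
        exact congrArg _ (prod_congr rfl fun i hi => by rw [h_erase i hi])

theorem sum_piFinset_range_ite_forall_le {ι R : Type*} [Fintype ι] [DecidableEq ι]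
    [AddCommMonoid R]
    (m : ℕ) (b : ι → ℕ) (F : (ι → ℕ) → R) (hF : ∀ K i, m < K i → F K = 0) :
    ∑ K ∈ Fintype.piFinset fun _ => range (m + 1), (if ∀ i, K i ≤ b i then F K else 0) =
      ∑ K ∈ Fintype.piFinset fun i => range (b i + 1), F K := by
  rw [← sum_filter]
  refine sum_subset (fun K hK => ?_) (fun K hK hK' => ?_)
  · simp only [mem_filter, Fintype.mem_piFinset, mem_range] at hK ⊢
    exact fun i => Nat.lt_succ_of_le (hK.2 i)
  · simp only [mem_filter, Fintype.mem_piFinset, mem_range, not_and] at hK hK'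
    obtain ⟨i, hi⟩ : ∃ i, m < K i := by
      by_contra! h
      exact hK' (fun i => Nat.lt_succ_of_le (h i)) (fun i => Nat.le_of_lt_succ (hK i))
    exact hF K i hi

theorem natCast_mul_sum_piFinset_sum_mul_prod_choose {ι : Type*} [Fintype ι] [DecidableEq ι]
    {m M n : ℕ} {b : ι → ℕ} (hM : ∑ i, b i = M) (hn : m + M = n) :
    (n : ℚ) * ∑ K ∈ Fintype.piFinset fun i => range (b i + 1),
        (∑ j, (K j : ℚ)) * ∏ i, ((m.choose (K i) : ℚ) * M.choose (b i - K i)) =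
      M * (m * ∏ i, (n.choose (b i) : ℚ)) := by
  have vandermonde (B : ℕ) :
      ∑ k ∈ range (B + 1), (m.choose k : ℚ) * M.choose (B - k) = n.choose B := by
    rw [← hn]
    exact_mod_cast sum_range_choose_mul_choose m M B
  have weighted_vandermonde (B : ℕ) :
      (n : ℚ) * ∑ k ∈ range (B + 1), (k : ℚ) * (m.choose k * M.choose (B - k)) =
        m * B * n.choose B := by
    rw [← hn]
    exact_mod_cast add_mul_sum_range_mul_choose_mul_choose m M B
  calc (n : ℚ) * ∑ K ∈ Fintype.piFinset fun i => range (b i + 1),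
        (∑ j, (K j : ℚ)) * ∏ i, ((m.choose (K i) : ℚ) * M.choose (b i - K i))
      = ∑ j, n * (∑ k ∈ range (b j + 1), (k : ℚ) * (m.choose k * M.choose (b j - k))) *
          ∏ i ∈ univ.erase j, ∑ k ∈ range (b i + 1), (m.choose k : ℚ) * M.choose (b i - k) := by
        rw [sum_piFinset_sum_mul_prod _ (fun k : ℕ => (k : ℚ))
          (fun i k => (m.choose k : ℚ) * M.choose (b i - k)), mul_sum]
        simp only [mul_assoc]
    _ = ∑ j, m * b j * ∏ i, (n.choose (b i) : ℚ) := by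
        refine sum_congr rfl fun j _ => ?_
        simp only [weighted_vandermonde, vandermonde]
        rw [mul_assoc, mul_prod_erase univ (fun i => (n.choose (b i) : ℚ)) (mem_univ j)]
    _ = M * (m * ∏ i, (n.choose (b i) : ℚ)) := by
        rw [← sum_mul, ← mul_sum, ← hM, Nat.cast_sum, mul_assoc, mul_left_comm]

section TaryTrees
variable {t : ℕ}

noncomputable def xyExp (n : ℕ) (b : Fin t → ℕ) : Fin (t + 1) →₀ ℕ :=
  Finsupp.equivFunOnFinite.symm (Fin.cons n b)

theorem coe_xyExp (n : ℕ) (b : Fin t → ℕ) : ⇑(xyExp n b) = Fin.cons n b := rfl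

theorem xyExp_le_xyExp_iff {q n : ℕ} {k b : Fin t → ℕ} :
    xyExp q k ≤ xyExp n b ↔ q ≤ n ∧ k ≤ b := by
  rw [← Finsupp.coe_le_coe, coe_xyExp, coe_xyExp]; exact Fin.cons_le_cons

theorem xyExp_sub_xyExp (q n : ℕ) (k b : Fin t → ℕ) :
    xyExp n b - xyExp q k = xyExp (n - q) (b - k) := by
  ext j
  cases j using Fin.cases <;> simp [coe_xyExp]

theorem xyExp_zero_zero : xyExp 0 (0 : Fin t → ℕ) = 0 := by
  ext j
  cases j using Fin.cases <;> simp [coe_xyExp]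

theorem monomial_xyExp_one {R : Type*} [CommSemiring R] (n : ℕ) (b : Fin t → ℕ) :
    monomial (xyExp n b) (1 : R) = X 0 ^ n * ∏ i, X i.succ ^ b i := by
  rw [monomial_one_eq, Finsupp.prod_fintype _ _ (fun _ => pow_zero _), Fin.prod_univ_succ]
  rfl

variable {G : MvPowerSeries (Fin (t + 1)) ℚ}

theorem pow_eq_sum_piFinset (hG : G = X 0 * ∏ i : Fin t, (1 + X i.succ * G)) (m : ℕ) :
    G ^ m = ∑ K ∈ Fintype.piFinset fun _ => range (m + 1),
      monomial (xyExp m K) (∏ i, (m.choose (K i) : ℚ)) * G ^ ∑ i, K i := by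
  conv_lhs => rw [hG]
  simp_rw [mul_pow, ← prod_pow, add_comm (1 : MvPowerSeries (Fin (t + 1)) ℚ), add_pow, one_pow,
    mul_one, mul_pow]
  rw [prod_univ_sum, mul_sum]
  refine sum_congr rfl fun K _ => ?_
  rw [prod_mul_distrib, prod_mul_distrib, prod_pow_eq_pow_sum]
  have hC : monomial (xyExp m K) (∏ i, (m.choose (K i) : ℚ)) =
      C (∏ i, (m.choose (K i) : ℚ)) * monomial (xyExp m K) 1 := by
    rw [← monomial_zero_eq_C_apply, monomial_mul_monomial, zero_add, mul_one]
  rw [hC, monomial_xyExp_one, map_prod]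
  simp only [map_natCast]
  ring

theorem coeff_pow_eq_sum_piFinset (hG : G = X 0 * ∏ i : Fin t, (1 + X i.succ * G)) {m n : ℕ}
    (hmn : m ≤ n) (b : Fin t → ℕ) :
    coeff (xyExp n b) (G ^ m) = ∑ K ∈ Fintype.piFinset fun i => range (b i + 1),
      (∏ i, (m.choose (K i) : ℚ)) * coeff (xyExp (n - m) (b - K)) (G ^ ∑ i, K i) := by
  rw [pow_eq_sum_piFinset hG, map_sum, ← sum_piFinset_range_ite_forall_le m b]
  · refine sum_congr rfl fun K _ => ?_
    simp only [coeff_monomial_mul, xyExp_le_xyExp_iff, hmn, true_and, xyExp_sub_xyExp, Pi.le_def]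
    split_ifs <;> rfl
  · intro K i hi
    rw [prod_eq_zero (mem_univ i) (by exact_mod_cast Nat.choose_eq_zero_of_lt hi), zero_mul]

/-- Multiplied by `n`, the formula also holds for `m = 0`, which the induction needs for the
term `K = 0` of the recurrence. -/
theorem natCast_mul_coeff_pow (hG : G = X 0 * ∏ i : Fin t, (1 + X i.succ * G)) {n m : ℕ}
    {b : Fin t → ℕ} (hsum : ∑ i, b i + m = n) :
    (n : ℚ) * coeff (xyExp n b) (G ^ m) = m * ∏ i, (n.choose (b i) : ℚ) := by
  induction n using Nat.strong_induction_on generalizing m b with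
  | _ n IH =>
  rcases Nat.eq_zero_or_pos m with rfl | hm
  · rcases Nat.eq_zero_or_pos n with rfl | hn
    · simp
    rw [pow_zero, coeff_one, Nat.cast_zero, zero_mul]
    split_ifs with h
    · simpa [coe_xyExp, hn.ne'] using DFunLike.congr_fun h 0
    · exact mul_zero _
  rcases Nat.eq_zero_or_pos (∑ i, b i) with hb0 | hb0
  · have hb : b = 0 := funext fun i => sum_eq_zero_iff.1 hb0 i (mem_univ i)
    subst hb
    rw [coeff_pow_eq_sum_piFinset hG (by omega)]
    simp [← hsum, xyExp_zero_zero]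
  have hnm : n - m = ∑ i, b i := by omega
  have IH_K : ∀ K ∈ Fintype.piFinset fun i => range (b i + 1),
      ((∑ i, b i : ℕ) : ℚ) * coeff (xyExp (n - m) (b - K)) (G ^ ∑ i, K i) =
        (∑ i, K i : ℕ) * ∏ i, ((∑ i, b i).choose (b i - K i) : ℚ) := by
    intro K hK
    have hKb (i) : K i ≤ b i := Nat.le_of_lt_succ (mem_range.1 (Fintype.mem_piFinset.1 hK i))
    have hsumK : ∑ i, (b - K) i + ∑ i, K i = n - m := by
      rw [← sum_add_distrib, hnm]
      exact sum_congr rfl fun i _ => Nat.sub_add_cancel (hKb i)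
    rw [← hnm, IH (n - m) (by omega) hsumK]
    rfl
  refine mul_left_cancel₀ (Nat.cast_ne_zero.2 hb0.ne') ?_
  rw [coeff_pow_eq_sum_piFinset hG (by omega), mul_left_comm, mul_sum,
    ← natCast_mul_sum_piFinset_sum_mul_prod_choose (b := b) rfl (by omega)]
  refine congrArg _ (sum_congr rfl fun K hK => ?_)
  rw [mul_left_comm, IH_K K hK, prod_mul_distrib]
  push_cast
  ring

end TaryTrees

theorem tary_forest_gf_coeff_general (t : ℕ)
    (G : MvPowerSeries (Fin (t + 1)) ℚ)
    (hG : G = MvPowerSeries.X 0 * ∏ i : Fin t, (1 + MvPowerSeries.X i.succ * G))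
    (m : ℕ) (hm : 1 ≤ m) (hmt : m ≤ t)
    (n : ℕ) (a : Fin t → ℕ) (ha : ∑ i, a i = n)
    (hpos : ∀ i : Fin t, (i : ℕ) < m → 1 ≤ a i) :
    MvPowerSeries.coeff (Finsupp.equivFunOnFinite.symm (Fin.cons n a))
        ((∏ i ∈ Finset.univ.filter (fun i : Fin t => (i : ℕ) < m),
            MvPowerSeries.X i.succ) * G ^ m) =
      (m / n : ℚ) *
        ∏ i : Fin t,
          (if (i : ℕ) < m then (n.choose (a i - 1) : ℚ) else (n.choose (a i) : ℚ)) := by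
  set w : Fin t → ℕ := fun i => if (i : ℕ) < m then 1 else 0
  have hw_le : w ≤ a := fun i => by
    by_cases h : (i : ℕ) < m <;> simp [w, h, hpos]
  have hw_sum : ∑ i, w i = m := by
    simp [w, sum_boole, Fin.card_filter_val_lt, hmt]
  have hprefix : ∏ i ∈ univ.filter (fun i : Fin t => (i : ℕ) < m), X i.succ =
      (monomial (xyExp 0 w) 1 : MvPowerSeries (Fin (t + 1)) ℚ) := by
    rw [monomial_xyExp_one, pow_zero, one_mul, prod_filter]
    exact prod_congr rfl fun i _ => by by_cases h : (i : ℕ) < m <;> simp [w, h]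
  have hsum : ∑ i, (a - w) i + m = n := by
    rw [← hw_sum, ← sum_add_distrib, ← ha]
    exact sum_congr rfl fun i _ => Nat.sub_add_cancel (hw_le i)
  have hn : (n : ℚ) ≠ 0 := Nat.cast_ne_zero.2 (by omega)
  change coeff (xyExp n a) _ = _
  rw [hprefix, coeff_monomial_mul, if_pos (xyExp_le_xyExp_iff.2 ⟨Nat.zero_le n, hw_le⟩), one_mul,
    xyExp_sub_xyExp, Nat.sub_zero, div_mul_eq_mul_div, eq_div_iff hn, mul_comm,
    natCast_mul_coeff_pow hG hsum]
  refine congrArg _ (prod_congr rfl fun i _ => ?_)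
  by_cases h : (i : ℕ) < m <;> simp [w, h]

/-- Let `G` be a formal power series in `x, y_1, …, y_t` over `ℚ`
(variable `0` is `x`, variable `i.succ` is `y_i`) with zero constant term satisfying
`G = x·∏_{i=1}^t (1 + y_i·G)`, and let `1 ≤ m ≤ t`. Then for every `n ≥ m` and every
tuple `a` with `∑ a_i = n` and `a_i ≥ 1` for all `i ≤ m` (as indices `1, …, m`),
the coefficient of `x^n·y_1^{a_1}⋯y_t^{a_t}` in `y_1⋯y_m·G^m` equals
`(m/n)·C(n,a_1−1)⋯C(n,a_m−1)·C(n,a_{m+1})⋯C(n,a_t)`. -/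
theorem tary_forest_gf_coeff (t : ℕ) (ht : 1 ≤ t)
    (G : MvPowerSeries (Fin (t + 1)) ℚ)
    (hG0 : MvPowerSeries.constantCoeff G = 0)
    (hG : G = MvPowerSeries.X 0 * ∏ i : Fin t, (1 + MvPowerSeries.X i.succ * G))
    (m : ℕ) (hm : 1 ≤ m) (hmt : m ≤ t)
    (n : ℕ) (hn : m ≤ n) (a : Fin t → ℕ) (ha : ∑ i, a i = n)
    (hpos : ∀ i : Fin t, (i : ℕ) < m → 1 ≤ a i) :
    MvPowerSeries.coeff (Finsupp.equivFunOnFinite.symm (Fin.cons n a))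
        ((∏ i ∈ Finset.univ.filter (fun i : Fin t => (i : ℕ) < m),
            MvPowerSeries.X i.succ) * G ^ m) =
      (m / n : ℚ) *
        ∏ i : Fin t,
          (if (i : ℕ) < m then (n.choose (a i - 1) : ℚ) else (n.choose (a i) : ℚ)) :=
  tary_forest_gf_coeff_general t G hG m hm hmt n a ha hpos
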